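/- arXiv:1409.5853 — 2 statements merged into one kernel-verified Lean document; each statement's English description precedes it below -/
import Mathlib

section
/- In the construction of the previous lemma, the Laplacian L(G(X)) is congruent over ℤ to the block-diagonal matrix with blocks L(G₁) and L(G₂) + Σ_{i=1}^{k} E_{Y_i,Y_i}, where E_{Y_i,Y_i} is the matrix with a single 1 in the (Y_i,Y_i) entry. -/
/-!
Adding all rows and columns indexed by `G₂` to the row and column of `X` is a unimodular
congruence. Every row of `L(G₂)` sums to `0`, so the rows of the `G₂`-block of `L(G(X))` sum to
the indicator of `{Y₁, …, Y_k}`; this is exactly minus the coupling between `X` and `G₂`, so the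
off-diagonal blocks vanish, and the same cancellation removes the `k` extra edges from the degree
of `X`.
-/

open Matrix

/-- The graph `G(X)`: disjoint union of `G₁` and `G₂` together with an edge between the
vertex `X` of `G₁` and each of the distinguished vertices `Y₁, …, Y_k` of `G₂`. -/
def glueGraph {V₁ V₂ : Type*} (G₁ : SimpleGraph V₁) (G₂ : SimpleGraph V₂)
    (X : V₁) {k : ℕ} (Y : Fin k → V₂) : SimpleGraph (V₁ ⊕ V₂) where
  Adj v w :=
    match v, w with
    | Sum.inl a, Sum.inl b => G₁.Adj a b
    | Sum.inr a, Sum.inr b => G₂.Adj a b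
    | Sum.inl a, Sum.inr b => a = X ∧ ∃ i, Y i = b
    | Sum.inr a, Sum.inl b => b = X ∧ ∃ i, Y i = a
  symm := ⟨by
    rintro (a | a) (b | b) h
    · exact G₁.adj_symm h
    · exact h
    · exact h
    · exact G₂.adj_symm h⟩
  loopless := ⟨by
    rintro (a | a) h
    · exact G₁.irrefl h
    · exact G₂.irrefl h⟩

instance glueGraph.adjDecidable {V₁ V₂ : Type*} [DecidableEq V₁] [DecidableEq V₂]
    (G₁ : SimpleGraph V₁) (G₂ : SimpleGraph V₂) (X : V₁) {k : ℕ} (Y : Fin k → V₂)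
    [DecidableRel G₁.Adj] [DecidableRel G₂.Adj] :
    DecidableRel (glueGraph G₁ G₂ X Y).Adj := fun v w =>
  match v, w with
  | Sum.inl a, Sum.inl b => inferInstanceAs (Decidable (G₁.Adj a b))
  | Sum.inr a, Sum.inr b => inferInstanceAs (Decidable (G₂.Adj a b))
  | Sum.inl a, Sum.inr b => inferInstanceAs (Decidable (a = X ∧ ∃ i, Y i = b))
  | Sum.inr a, Sum.inl b => inferInstanceAs (Decidable (b = X ∧ ∃ i, Y i = a))

namespace Matrix

variable {ι m n R : Type*} [Fintype m] [Fintype n] [DecidableEq m] [DecidableEq n]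

theorem fromBlocks_shear_congr [Semiring R] (A : Matrix m m R) (B : Matrix m n R)
    (C : Matrix n m R) (D : Matrix n n R) (E : Matrix n m R)
    (hB : B + Eᵀ * D = 0) (hC : C + D * E = 0) :
    (fromBlocks 1 0 E 1)ᵀ * fromBlocks A B C D * fromBlocks 1 0 E 1 =
      fromBlocks (A + Eᵀ * C) 0 0 D := by
  simp only [fromBlocks_transpose, transpose_one, transpose_zero, fromBlocks_multiply,
    Matrix.one_mul, Matrix.mul_one, Matrix.zero_mul, Matrix.mul_zero, zero_add]
  rw [hB, hC, Matrix.zero_mul, add_zero]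

theorem sum_single_comp_eq_diagonal_indicator [Fintype ι] [AddCommMonoid R] {Y : ι → n}
    (hY : Function.Injective Y) (f : n → R) :
    ∑ i, single (Y i) (Y i) (f (Y i)) = diagonal ((Set.range Y).indicator f) := by
  classical
  rw [← sum_single_eq_diagonal, ← Set.image_univ, ← Finset.coe_univ, ← Finset.coe_image,
    Finset.sum_indicator_subset_of_eq_zero f (fun b ↦ single b b) (Finset.subset_univ _)
      (fun b ↦ single_zero b b), Finset.sum_image fun i _ j _ h ↦ hY h]

end Matrix

namespace SimpleGraph

variable {V R : Type*} [Fintype V] [DecidableEq V] (G : SimpleGraph V) [DecidableRel G.Adj]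

theorem lapMatrix_apply [AddGroupWithOne R] (i j : V) :
    G.lapMatrix R i j = (if i = j then (G.degree i : R) else 0) - if G.Adj i j then 1 else 0 := by
  simp [lapMatrix, degMatrix, diagonal_apply, adjMatrix_apply]

theorem lapMatrix_add_diagonal_mulVec_one [Ring R] (d : V → R) :
    (G.lapMatrix R + diagonal d) *ᵥ 1 = d := by
  rw [add_mulVec, show (1 : V → R) = fun _ ↦ 1 from rfl, lapMatrix_mulVec_const_eq_zero, zero_add]
  ext v
  simp [mulVec_diagonal]

theorem one_vecMul_lapMatrix_add_diagonal [CommRing R] (d : V → R) :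
    1 ᵥ* (G.lapMatrix R + diagonal d) = d := by
  rw [← mulVec_transpose, transpose_add, (G.isSymm_lapMatrix R).eq, diagonal_transpose,
    lapMatrix_add_diagonal_mulVec_one]

end SimpleGraph

namespace glueGraph

variable {V₁ V₂ R : Type*} (G₁ : SimpleGraph V₁) (G₂ : SimpleGraph V₂) {k : ℕ} (Y : Fin k → V₂)
  (X : V₁)

@[simp] theorem adj_inl_inl {a b : V₁} :
    (glueGraph G₁ G₂ X Y).Adj (.inl a) (.inl b) ↔ G₁.Adj a b := Iff.rfl

@[simp] theorem adj_inr_inr {a b : V₂} :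
    (glueGraph G₁ G₂ X Y).Adj (.inr a) (.inr b) ↔ G₂.Adj a b := Iff.rfl

@[simp] theorem adj_inl_inr {a : V₁} {b : V₂} :
    (glueGraph G₁ G₂ X Y).Adj (.inl a) (.inr b) ↔ a = X ∧ b ∈ Set.range Y := by
  simp [glueGraph]

@[simp] theorem adj_inr_inl {a : V₂} {b : V₁} :
    (glueGraph G₁ G₂ X Y).Adj (.inr a) (.inl b) ↔ b = X ∧ a ∈ Set.range Y := by
  simp [glueGraph]

variable [Fintype V₁] [Fintype V₂] [DecidableEq V₁] [DecidableEq V₂]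
  [DecidableRel G₁.Adj] [DecidableRel G₂.Adj]

theorem degree_inl [AddCommMonoidWithOne R] (a : V₁) :
    ((glueGraph G₁ G₂ X Y).degree (.inl a) : R) =
      G₁.degree a + if a = X then ∑ b, (Set.range Y).indicator 1 b else 0 := by
  rw [SimpleGraph.degree_eq_sum_if_adj, Fintype.sum_sum_type, G₁.degree_eq_sum_if_adj]
  split_ifs with ha <;> simp [ha, Set.indicator_apply]

theorem degree_inr [AddCommMonoidWithOne R] (b : V₂) :
    ((glueGraph G₁ G₂ X Y).degree (.inr b) : R) = G₂.degree b + (Set.range Y).indicator 1 b := by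
  rw [SimpleGraph.degree_eq_sum_if_adj, Fintype.sum_sum_type, G₂.degree_eq_sum_if_adj, add_comm]
  simp only [adj_inr_inl, adj_inr_inr, ite_and, Finset.sum_ite_eq', Finset.mem_univ, if_true,
    Set.indicator_apply, Pi.one_apply]

theorem lapMatrix_eq_fromBlocks [Ring R] :
    (glueGraph G₁ G₂ X Y).lapMatrix R =
      fromBlocks (G₁.lapMatrix R + single X X (∑ b, (Set.range Y).indicator 1 b))
        (-vecMulVec (Pi.single X 1) ((Set.range Y).indicator 1))
        (-vecMulVec ((Set.range Y).indicator 1) (Pi.single X 1))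
        (G₂.lapMatrix R + diagonal ((Set.range Y).indicator 1)) := by
  ext (a | a) (b | b)
  · rcases eq_or_ne a b with rfl | hab
    · by_cases ha : a = X
      · simp [SimpleGraph.lapMatrix_apply, degree_inl, ha]
      · simp [SimpleGraph.lapMatrix_apply, degree_inl, ha, Ne.symm ha]
    · simp [SimpleGraph.lapMatrix_apply, hab]
      exact single_apply_of_ne _ _ _ _ _ fun h ↦ hab (h.1 ▸ h.2)
  · simp [SimpleGraph.lapMatrix_apply, vecMulVec_apply, Pi.single_apply, Set.indicator_apply]
    split_ifs <;> simp_all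
  · simp [SimpleGraph.lapMatrix_apply, vecMulVec_apply, Pi.single_apply, Set.indicator_apply]
    split_ifs <;> simp_all
  · rcases eq_or_ne a b with rfl | hab
    · simp [SimpleGraph.lapMatrix_apply, degree_inr]
    · simp [SimpleGraph.lapMatrix_apply, hab]

end glueGraph

/-- The Laplacian of `G(X)` is congruent over `ℤ` to the block-diagonal matrix with blocks
`L(G₁)` and `L(G₂) + Σᵢ E_{Yᵢ,Yᵢ}`. -/
theorem stmt_7 {V₁ V₂ : Type*} [Fintype V₁] [Fintype V₂] [DecidableEq V₁] [DecidableEq V₂]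
    (G₁ : SimpleGraph V₁) (G₂ : SimpleGraph V₂)
    [DecidableRel G₁.Adj] [DecidableRel G₂.Adj]
    {k : ℕ} (Y : Fin k → V₂) (hY : Function.Injective Y) (X : V₁) :
    ∃ T : Matrix (V₁ ⊕ V₂) (V₁ ⊕ V₂) ℤ, IsUnit T.det ∧
      Tᵀ * (glueGraph G₁ G₂ X Y).lapMatrix ℤ * T =
        Matrix.fromBlocks (G₁.lapMatrix ℤ) 0 0
          (G₂.lapMatrix ℤ + ∑ i, Matrix.single (Y i) (Y i) 1) := by
  refine ⟨fromBlocks 1 0 (vecMulVec 1 (Pi.single X 1)) 1, by simp, ?_⟩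
  rw [glueGraph.lapMatrix_eq_fromBlocks, fromBlocks_shear_congr,
    ← sum_single_comp_eq_diagonal_indicator hY]
  · congr 1
    ext a b
    simp only [transpose_vecMulVec, Matrix.mul_neg, vecMulVec_mul_vecMulVec, one_dotProduct,
      Matrix.add_apply, Matrix.neg_apply, vecMulVec_apply, single_apply, Pi.smul_apply,
      Pi.single_apply, smul_eq_mul]
    split_ifs <;> simp_all
  · rw [transpose_vecMulVec, vecMulVec_mul, G₂.one_vecMul_lapMatrix_add_diagonal, neg_add_cancel]
  · rw [mul_vecMulVec, G₂.lapMatrix_add_diagonal_mulVec_one, neg_add_cancel]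
end

section
/- Declare two finite graphs equivalent if the quadratic forms represented by their combinatorial Laplacians are equivalent over ℤ. Then the wedge sum of graphs descends to a well-defined binary operation on equivalence classes: if G₁ is equivalent to H₁, then for any choices of wedge vertices, G₁ ∨ G₂ is equivalent to H₁ ∨ G₂. -/
open Matrix

/-- The wedge sum `G₁ ∨_{X,Y} G₂`: the quotient of the disjoint union of `G₁` and `G₂`
identifying the vertex `X` of `G₁` with the vertex `Y` of `G₂` (modelled on the vertex set
`V₁ ⊕ {v : V₂ // v ≠ Y}`, with `X` playing the role of the identified vertex). -/
def wedgeGraph {V₁ V₂ : Type*} (G₁ : SimpleGraph V₁) (G₂ : SimpleGraph V₂)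
    (X : V₁) (Y : V₂) : SimpleGraph (V₁ ⊕ {v : V₂ // v ≠ Y}) where
  Adj v w :=
    match v, w with
    | Sum.inl a, Sum.inl b => G₁.Adj a b
    | Sum.inr a, Sum.inr b => G₂.Adj a b
    | Sum.inl a, Sum.inr b => a = X ∧ G₂.Adj Y b
    | Sum.inr a, Sum.inl b => b = X ∧ G₂.Adj Y a
  symm := by
    constructor
    rintro (a | a) (b | b) h
    · exact G₁.adj_symm h
    · exact h
    · exact h
    · exact G₂.adj_symm h
  loopless := by
    constructor
    rintro (a | a) h
    · exact G₁.irrefl h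
    · exact G₂.irrefl h

instance wedgeGraph.adjDecidable {V₁ V₂ : Type*} [DecidableEq V₁] [DecidableEq V₂]
    (G₁ : SimpleGraph V₁) (G₂ : SimpleGraph V₂) (X : V₁) (Y : V₂)
    [DecidableRel G₁.Adj] [DecidableRel G₂.Adj] :
    DecidableRel (wedgeGraph G₁ G₂ X Y).Adj := fun v w =>
  match v, w with
  | Sum.inl a, Sum.inl b => inferInstanceAs (Decidable (G₁.Adj a b))
  | Sum.inr a, Sum.inr b => inferInstanceAs (Decidable (G₂.Adj a.1 b.1))
  | Sum.inl a, Sum.inr b => inferInstanceAs (Decidable (a = X ∧ G₂.Adj Y b.1))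
  | Sum.inr a, Sum.inl b => inferInstanceAs (Decidable (b = X ∧ G₂.Adj Y a.1))

/-!
Write `K_Y` for the Laplacian of `G₂` with the row and column of `Y` deleted. The unimodular
substitution `y ↦ y - x_X` on the coordinates of `G₂ - Y` splits the Laplacian form of
`G₁ ∨_{X,Y} G₂` as the orthogonal sum of the Laplacian form of `G₁` and `K_Y`. The Laplacian form
of `G₂` is invariant under adding constant vectors, so the substitution `y ↦ y - y_Y` identifies
`K_{Y'}` with `K_Y` over `ℤ`. Hence
`G₁ ∨_{X,Y} G₂ ≅ L(G₁) ⊕ K_Y ≅ L(H₁) ⊕ K_{Y'} ≅ H₁ ∨_{X',Y'} G₂`.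
-/

namespace Matrix

section Congruent

variable {m n p m' n' R : Type*} [CommRing R]

def IsCongruent [Fintype n] [DecidableEq n] (A : Matrix m m R) (B : Matrix n n R) : Prop :=
  ∃ e : m ≃ n, ∃ T : Matrix n n R, IsUnit T.det ∧ Tᵀ * reindex e e A * T = B

variable [Fintype m] [DecidableEq m] [Fintype n] [DecidableEq n]

theorem IsCongruent.transpose_mul_mul (A : Matrix n n R) {T : Matrix n n R}
    (hT : IsUnit T.det) : IsCongruent A (Tᵀ * A * T) :=
  ⟨Equiv.refl n, T, hT, by rw [reindex_refl_refl]⟩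

theorem IsCongruent.transpose_mul_mul_of_mul_eq_one (e : m ≃ n) (A : Matrix m m R)
    {M : Matrix m n R} {N : Matrix n m R} (hMN : M * N = 1) : IsCongruent A (Mᵀ * A * M) := by
  refine ⟨e, M.submatrix e.symm id,
    isUnit_det_of_right_inverse (B := N.submatrix id e.symm) ?_, ?_⟩
  · rw [← submatrix_mul _ _ _ _ _ Function.bijective_id, hMN, submatrix_one_equiv]
  · rw [reindex_apply, transpose_submatrix, submatrix_mul_equiv,
      ← submatrix_mul _ _ _ _ _ e.symm.bijective, submatrix_id_id]

theorem IsCongruent.symm {A : Matrix m m R} {B : Matrix n n R} (h : IsCongruent A B) :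
    IsCongruent B A := by
  obtain ⟨e, T, hT, rfl⟩ := h
  refine ⟨e.symm, reindex e.symm e.symm T⁻¹,
    by rwa [det_reindex_self, isUnit_nonsing_inv_det_iff], ?_⟩
  calc (reindex e.symm e.symm T⁻¹)ᵀ * reindex e.symm e.symm (Tᵀ * reindex e e A * T) *
        reindex e.symm e.symm T⁻¹
      = reindex e.symm e.symm ((T * T⁻¹)ᵀ * reindex e e A * (T * T⁻¹)) := by
        simp only [reindex_apply, transpose_submatrix, submatrix_mul_equiv, transpose_mul,
          Matrix.mul_assoc]
    _ = A := by simp [mul_nonsing_inv _ hT]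

omit [Fintype m] [DecidableEq m] in
theorem IsCongruent.trans [Fintype p] [DecidableEq p] {A : Matrix m m R} {B : Matrix n n R}
    {C : Matrix p p R} (hAB : IsCongruent A B) (hBC : IsCongruent B C) : IsCongruent A C := by
  obtain ⟨e, T, hT, rfl⟩ := hAB
  obtain ⟨f, U, hU, rfl⟩ := hBC
  refine ⟨e.trans f, reindex f f T * U, by rw [det_mul, det_reindex_self]; exact hT.mul hU, ?_⟩
  calc (reindex f f T * U)ᵀ * reindex (e.trans f) (e.trans f) A * (reindex f f T * U)
      = Uᵀ * (reindex f f Tᵀ * reindex f f (reindex e e A) * reindex f f T) * U := by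
        simp only [transpose_mul, transpose_reindex, Matrix.mul_assoc]; rfl
    _ = Uᵀ * reindex f f (Tᵀ * reindex e e A * T) * U := by
        simp only [reindex_apply, submatrix_mul_equiv]

omit [Fintype m] [DecidableEq m] in
theorem IsCongruent.fromBlocks_zero [Fintype m'] [DecidableEq m'] [Fintype n'] [DecidableEq n']
    {A : Matrix m m R} {B : Matrix n n R} {C : Matrix m' m' R} {D : Matrix n' n' R}
    (hAB : IsCongruent A B) (hCD : IsCongruent C D) :
    IsCongruent (fromBlocks A 0 0 C) (fromBlocks B 0 0 D) := by
  obtain ⟨e, T, hT, rfl⟩ := hAB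
  obtain ⟨f, U, hU, rfl⟩ := hCD
  refine ⟨e.sumCongr f, fromBlocks T 0 0 U, by rw [det_fromBlocks_zero₂₁]; exact hT.mul hU, ?_⟩
  have hreindex : reindex (e.sumCongr f) (e.sumCongr f) (fromBlocks A 0 0 C) =
      fromBlocks (reindex e e A) 0 0 (reindex f f C) := by
    ext (i | i) (j | j) <;> simp
  rw [hreindex, fromBlocks_transpose, fromBlocks_multiply, fromBlocks_multiply]
  simp

end Congruent

section ZeroRowSums

variable {V l o R : Type*} [Fintype V] [DecidableEq V] [CommRing R]

theorem sum_subtype_ne_eq_neg {f : V → R} (hf : ∑ v, f v = 0) (Y : V) :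
    ∑ v : {v // v ≠ Y}, f v = -f Y := by
  rw [Fintype.sum_eq_add_sum_subtype_ne _ Y] at hf
  exact eq_neg_of_add_eq_zero_right hf

theorem eq_of_mulVec_one_eq_zero {M N : Matrix V V R} (hM : M *ᵥ 1 = 0) (hN : N *ᵥ 1 = 0)
    (h : ∀ i j, i ≠ j → M i j = N i j) : M = N := by
  ext i j
  obtain rfl | hij := eq_or_ne i j
  · have hdiag (A : Matrix V V R) (hA : A *ᵥ 1 = 0) : A i i = -∑ j : {j // j ≠ i}, A i j := by
      rw [sum_subtype_ne_eq_neg (f := A i) (by simpa [mulVec, dotProduct] using congrFun hA i),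
        neg_neg]
    rw [hdiag M hM, hdiag N hN]
    exact congrArg _ (Finset.sum_congr rfl fun j _ => h i j (Ne.symm j.2))
  · exact h i j hij

theorem submatrix_mul_submatrix_subtype_ne {A : Matrix l V R} {B : Matrix V o R} {Y : V}
    (hB : B Y = 0) {l' o' : Type*} (f : l' → l) (g : o' → o) :
    (A.submatrix f Subtype.val : Matrix l' {v // v ≠ Y} R) *
      (B.submatrix Subtype.val g : Matrix {v // v ≠ Y} o' R) = (A * B).submatrix f g := by
  ext i k
  simp only [mul_apply, submatrix_apply]
  rw [Fintype.sum_eq_add_sum_subtype_ne (fun j => A (f i) j * B j (g k)) Y, hB]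
  simp

def deleteRowCol (L : Matrix V V R) (Y : V) : Matrix {v // v ≠ Y} {v // v ≠ Y} R :=
  L.submatrix Subtype.val Subtype.val

theorem deleteRowCol_mulVec_one {L : Matrix V V R} (hL : L *ᵥ 1 = 0) (Y : V) :
    deleteRowCol L Y *ᵥ 1 = fun v : {v // v ≠ Y} => -L v Y := by
  ext v
  simpa [deleteRowCol, mulVec, dotProduct] using
    sum_subtype_ne_eq_neg (by simpa [mulVec, dotProduct] using congrFun hL v) Y

theorem one_vecMul_deleteRowCol {L : Matrix V V R} (hL : 1 ᵥ* L = 0) (Y : V) :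
    1 ᵥ* deleteRowCol L Y = fun w : {v // v ≠ Y} => -L Y w := by
  ext w
  simpa [deleteRowCol, vecMul, dotProduct] using
    sum_subtype_ne_eq_neg (by simpa [vecMul, dotProduct] using congrFun hL w) Y

variable (R) in
def basepointShift (Y : V) : Matrix V V R :=
  1 - vecMulVec 1 (Pi.single Y 1)

omit [Fintype V] in
theorem basepointShift_apply (Y v w : V) :
    basepointShift R Y v w = (if v = w then 1 else 0) - if w = Y then 1 else 0 := by
  simp [basepointShift, one_apply, Pi.single_apply]

omit [Fintype V] in
theorem basepointShift_apply_self (Y : V) : basepointShift R Y Y = 0 := by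
  ext w
  simp [basepointShift_apply, eq_comm]

theorem mul_basepointShift {L : Matrix l V R} (hL : L *ᵥ 1 = 0) (Y : V) :
    L * basepointShift R Y = L := by
  rw [basepointShift, Matrix.mul_sub, Matrix.mul_one, mul_vecMulVec, hL, zero_vecMulVec,
    sub_zero]

theorem basepointShift_mulVec_one (Y : V) : basepointShift R Y *ᵥ 1 = 0 := by
  rw [basepointShift, sub_mulVec, one_mulVec, vecMulVec_mulVec]
  simp

omit [Fintype V] in
theorem basepointShift_submatrix_subtype_ne (Y : V) {l' : Type*} (f : l' → V) :
    (basepointShift R Y).submatrix f (Subtype.val : {v // v ≠ Y} → V) =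
      (1 : Matrix V V R).submatrix f Subtype.val := by
  ext v w
  simp [basepointShift_apply, one_apply, w.2]

variable (R) in
def basepointChange (Y Y' : V) : Matrix {v // v ≠ Y} {v // v ≠ Y'} R :=
  (basepointShift R Y).submatrix Subtype.val Subtype.val

theorem basepointChange_mul_basepointChange (Y Y' : V) :
    basepointChange R Y Y' * basepointChange R Y' Y = 1 := by
  rw [basepointChange, basepointChange,
    submatrix_mul_submatrix_subtype_ne (basepointShift_apply_self Y'),
    mul_basepointShift (basepointShift_mulVec_one Y), basepointShift_submatrix_subtype_ne,
    submatrix_one _ Subtype.val_injective]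

theorem transpose_basepointChange_mul_deleteRowCol_mul {L : Matrix V V R} (hrow : L *ᵥ 1 = 0)
    (hcol : 1 ᵥ* L = 0) (Y Y' : V) :
    (basepointChange R Y Y')ᵀ * deleteRowCol L Y * basepointChange R Y Y' =
      deleteRowCol L Y' := by
  have hcol' : Lᵀ *ᵥ 1 = 0 := by rwa [mulVec_transpose]
  have hY := basepointShift_apply_self (R := R) Y
  calc (basepointChange R Y Y')ᵀ * deleteRowCol L Y * basepointChange R Y Y'
      = (basepointChange R Y Y')ᵀ * L.submatrix Subtype.val Subtype.val := by
        rw [Matrix.mul_assoc, deleteRowCol, basepointChange,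
          submatrix_mul_submatrix_subtype_ne hY, mul_basepointShift hrow]
        rfl
    _ = ((Lᵀ.submatrix Subtype.val Subtype.val : Matrix {v // v ≠ Y'} {v // v ≠ Y} R) *
        basepointChange R Y Y')ᵀ := by
        rw [transpose_mul, transpose_submatrix, transpose_transpose]
        rfl
    _ = deleteRowCol L Y' := by
        rw [basepointChange, submatrix_mul_submatrix_subtype_ne hY, mul_basepointShift hcol',
          transpose_submatrix, transpose_transpose, deleteRowCol]

theorem isCongruent_deleteRowCol {L : Matrix V V R} (hrow : L *ᵥ 1 = 0)
    (hcol : 1 ᵥ* L = 0) (Y Y' : V) : IsCongruent (deleteRowCol L Y) (deleteRowCol L Y') := by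
  have e : {v // v ≠ Y} ≃ {v // v ≠ Y'} :=
    (Equiv.swap Y Y').subtypeEquiv fun v => by simp [Equiv.swap_apply_eq_iff]
  rw [← transpose_basepointChange_mul_deleteRowCol_mul hrow hcol Y Y']
  exact .transpose_mul_mul_of_mul_eq_one e _ (basepointChange_mul_basepointChange Y Y')

end ZeroRowSums

end Matrix

namespace SimpleGraph

variable {V R : Type*} [Fintype V] [DecidableEq V] [CommRing R] (G : SimpleGraph V)
  [DecidableRel G.Adj]

theorem lapMatrix_apply_of_ne {i j : V} (h : i ≠ j) : G.lapMatrix R i j = -G.adjMatrix R i j := by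
  simp [lapMatrix, degMatrix, diagonal_apply_ne _ h]

theorem eq_lapMatrix_of_mulVec_one_eq_zero {M : Matrix V V R} (hM : M *ᵥ 1 = 0)
    (h : ∀ i j, i ≠ j → M i j = -G.adjMatrix R i j) : M = G.lapMatrix R :=
  eq_of_mulVec_one_eq_zero hM G.lapMatrix_mulVec_const_eq_zero fun i j hij =>
    (h i j hij).trans (G.lapMatrix_apply_of_ne hij).symm

theorem one_vecMul_lapMatrix : 1 ᵥ* G.lapMatrix R = 0 := by
  rw [← mulVec_transpose, (G.isSymm_lapMatrix R).eq]
  exact G.lapMatrix_mulVec_const_eq_zero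

end SimpleGraph

section Wedge

variable {V₁ V₂ R : Type*}

section Adj

variable (G₁ : SimpleGraph V₁) (G₂ : SimpleGraph V₂) (X : V₁) (Y : V₂)

@[simp] theorem wedgeGraph_adj_inl_inl (a b : V₁) :
    (wedgeGraph G₁ G₂ X Y).Adj (.inl a) (.inl b) ↔ G₁.Adj a b := Iff.rfl

@[simp] theorem wedgeGraph_adj_inl_inr (a : V₁) (w : {v // v ≠ Y}) :
    (wedgeGraph G₁ G₂ X Y).Adj (.inl a) (.inr w) ↔ a = X ∧ G₂.Adj Y w := Iff.rfl

@[simp] theorem wedgeGraph_adj_inr_inl (v : {v // v ≠ Y}) (b : V₁) :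
    (wedgeGraph G₁ G₂ X Y).Adj (.inr v) (.inl b) ↔ b = X ∧ G₂.Adj Y v := Iff.rfl

@[simp] theorem wedgeGraph_adj_inr_inr (v w : {v // v ≠ Y}) :
    (wedgeGraph G₁ G₂ X Y).Adj (.inr v) (.inr w) ↔ G₂.Adj v w := Iff.rfl

end Adj

variable [Fintype V₁] [Fintype V₂] [DecidableEq V₁] [DecidableEq V₂] [CommRing R]

variable (R) in
def wedgeShear (X : V₁) (Y : V₂) : Matrix (V₁ ⊕ {v // v ≠ Y}) (V₁ ⊕ {v // v ≠ Y}) R :=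
  fromBlocks 1 0 (-vecMulVec 1 (Pi.single X 1)) 1

theorem det_wedgeShear (X : V₁) (Y : V₂) : (wedgeShear R X Y).det = 1 := by
  simp [wedgeShear]

theorem wedgeShear_mulVec_one (X : V₁) (Y : V₂) :
    wedgeShear R X Y *ᵥ 1 = Sum.elim (1 : V₁ → R) 0 := by
  rw [wedgeShear, fromBlocks_mulVec]
  simp only [neg_mulVec, vecMulVec_mulVec]
  simp

theorem lapMatrix_wedgeGraph (G₁ : SimpleGraph V₁) (G₂ : SimpleGraph V₂) [DecidableRel G₁.Adj]
    [DecidableRel G₂.Adj] (X : V₁) (Y : V₂) :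
    (wedgeGraph G₁ G₂ X Y).lapMatrix R = (wedgeShear R X Y)ᵀ *
      fromBlocks (G₁.lapMatrix R) 0 0 (deleteRowCol (G₂.lapMatrix R) Y) * wedgeShear R X Y := by
  -- Both sides have zero row sums, so only the off-diagonal entries need to be compared.
  symm
  apply SimpleGraph.eq_lapMatrix_of_mulVec_one_eq_zero
  · rw [← mulVec_mulVec, ← mulVec_mulVec, wedgeShear_mulVec_one, fromBlocks_mulVec]
    simp [show G₁.lapMatrix R *ᵥ 1 = 0 from G₁.lapMatrix_mulVec_const_eq_zero]
  · simp only [wedgeShear, fromBlocks_transpose, fromBlocks_multiply, transpose_neg,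
      transpose_vecMulVec, Matrix.neg_mul, Matrix.mul_neg, vecMulVec_mul, mul_vecMulVec,
      deleteRowCol_mulVec_one (G₂.lapMatrix_mulVec_const_eq_zero (R := R)),
      one_vecMul_deleteRowCol (G₂.one_vecMul_lapMatrix (R := R)), Matrix.one_mul,
      Matrix.mul_one, Matrix.zero_mul, Matrix.mul_zero, add_zero, zero_add, transpose_one,
      transpose_zero]
    rintro (a | v) (b | w) hne
    · have hab : a ≠ b := fun h => hne (h ▸ rfl)
      simp [vecMulVec_apply, Pi.single_apply, G₁.lapMatrix_apply_of_ne hab, neg_mulVec,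
        vecMulVec_mulVec]
      rintro rfl rfl
      exact absurd rfl hab
    · have hw : Y ≠ w := fun h => w.2 h.symm
      by_cases ha : a = X <;> simp [vecMulVec_apply, G₂.lapMatrix_apply_of_ne hw, ha]
    · have hv : (v : V₂) ≠ Y := v.2
      by_cases hb : b = X <;> simp [vecMulVec_apply, G₂.lapMatrix_apply_of_ne hv, hb, G₂.adj_comm]
    · have hvw : (v : V₂) ≠ w := fun h => hne (Subtype.ext h ▸ rfl)
      simp [deleteRowCol, G₂.lapMatrix_apply_of_ne hvw]

theorem isCongruent_lapMatrix_wedgeGraph (G₁ : SimpleGraph V₁) (G₂ : SimpleGraph V₂)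
    [DecidableRel G₁.Adj] [DecidableRel G₂.Adj] (X : V₁) (Y : V₂) :
    IsCongruent (fromBlocks (G₁.lapMatrix R) 0 0 (deleteRowCol (G₂.lapMatrix R) Y))
      ((wedgeGraph G₁ G₂ X Y).lapMatrix R) := by
  rw [lapMatrix_wedgeGraph]
  exact .transpose_mul_mul _ (by rw [det_wedgeShear]; exact isUnit_one)

end Wedge

/-- The wedge sum descends to a well-defined operation on equivalence classes of graphs
under equivalence of Laplacian quadratic forms over `ℤ`: if `G₁` is equivalent to `H₁`,
then for any choices of wedge vertices `G₁ ∨ G₂` is equivalent to `H₁ ∨ G₂`. -/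
theorem stmt_9 {V₁ V₂ : Type*} [Fintype V₁] [Fintype V₂] [DecidableEq V₁] [DecidableEq V₂]
    (G₁ H₁ : SimpleGraph V₁) (G₂ : SimpleGraph V₂)
    [DecidableRel G₁.Adj] [DecidableRel H₁.Adj] [DecidableRel G₂.Adj]
    (hequiv : ∃ P : Matrix V₁ V₁ ℤ, IsUnit P.det ∧
      Pᵀ * G₁.lapMatrix ℤ * P = H₁.lapMatrix ℤ)
    (X X' : V₁) (Y Y' : V₂) :
    ∃ e : (V₁ ⊕ {v : V₂ // v ≠ Y}) ≃ (V₁ ⊕ {v : V₂ // v ≠ Y'}),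
      ∃ T : Matrix (V₁ ⊕ {v : V₂ // v ≠ Y'}) (V₁ ⊕ {v : V₂ // v ≠ Y'}) ℤ,
        IsUnit T.det ∧
        Tᵀ * (Matrix.reindex e e ((wedgeGraph G₁ G₂ X Y).lapMatrix ℤ)) * T =
          (wedgeGraph H₁ G₂ X' Y').lapMatrix ℤ := by
  obtain ⟨P, hP, hPL⟩ := hequiv
  have hG₁ : IsCongruent (G₁.lapMatrix ℤ) (H₁.lapMatrix ℤ) := hPL ▸ .transpose_mul_mul _ hP
  have hG₂ : IsCongruent (deleteRowCol (G₂.lapMatrix ℤ) Y) (deleteRowCol (G₂.lapMatrix ℤ) Y') :=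
    isCongruent_deleteRowCol G₂.lapMatrix_mulVec_const_eq_zero G₂.one_vecMul_lapMatrix Y Y'
  exact (isCongruent_lapMatrix_wedgeGraph G₁ G₂ X Y).symm.trans
    ((hG₁.fromBlocks_zero hG₂).trans (isCongruent_lapMatrix_wedgeGraph H₁ G₂ X' Y'))
end
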